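/- For a nonempty closed set K ⊆ ℝ^3, the function y ↦ ½ dist(y, K)² is differentiable at every y admitting a unique closest point p(y) ∈ K, with gradient y - p(y). -/

import Mathlib

/-!
Comparing with the candidate `p` gives `½ d(z)² ≤ ½ ‖z - p‖²`, an upper bound for the Taylor
remainder at `y` with error `½ ‖z - y‖²`; comparing `y` with a nearest point `q z` of `z` gives a
lower bound with error `‖z - y‖ ‖p - q z‖`. Uniqueness of `p` and compactness of closed balls
force `q z → p` as `z → y`, so both errors are `o(‖z - y‖)`.
-/

open Metric Filter Topology Asymptotics

theorem tendsto_nearest_of_unique {α : Type*} [MetricSpace α] [ProperSpace α] {K : Set α}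
    (hKc : IsClosed K) {y p : α}
    (huniq : ∀ q ∈ K, dist y q = infDist y K → q = p)
    {q : α → α} (hqK : ∀ z, q z ∈ K) (hq : ∀ z, dist z (q z) = infDist z K) :
    Tendsto q (𝓝 y) (𝓝 p) := by
  have hball : ∀ ε > 0, ∀ᶠ z in 𝓝 y, q z ∈ closedBall y (infDist y K + ε) := by
    intro ε hε
    filter_upwards [ball_mem_nhds y (half_pos hε)] with z hz
    rw [mem_ball] at hz
    rw [mem_closedBall]
    calc dist (q z) y ≤ dist z (q z) + dist z y := dist_triangle_left _ _ _
      _ = infDist z K + dist z y := by rw [hq]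
      _ ≤ infDist y K + ε := by
        linarith [infDist_le_infDist_add_dist (x := z) (y := y) (s := K)]
  refine (isCompact_closedBall y (infDist y K + 1)).tendsto_nhds_of_unique_mapClusterPt
    (hball 1 one_pos) fun x _ hx => ?_
  have hxK : x ∈ K := hKc.mem_of_mapClusterPt hx (.of_forall hqK)
  refine huniq x hxK (le_antisymm (le_of_forall_pos_le_add fun ε hε => ?_)
    (infDist_le_dist_of_mem hxK))
  rw [dist_comm, ← mem_closedBall]
  exact isClosed_closedBall.mem_of_mapClusterPt hx (hball ε hε)

section InnerProduct

variable {E : Type*} [NormedAddCommGroup E] [InnerProductSpace ℝ E]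

lemma abs_half_infDist_sq_sub_inner_le {K : Set E} {y z p q : E}
    (hp : p ∈ K) (hd : dist y p = infDist y K) (hq : q ∈ K) (hzq : dist z q = infDist z K) :
    |1 / 2 * infDist z K ^ 2 - 1 / 2 * infDist y K ^ 2 - inner ℝ (y - p) (z - y)|
      ≤ ‖z - y‖ * (1 / 2 * ‖z - y‖ + ‖p - q‖) := by
  have hsplit : ∀ w : E, ‖z - w‖ ^ 2 = ‖z - y‖ ^ 2 + 2 * inner ℝ (z - y) (y - w) + ‖y - w‖ ^ 2 :=
    fun w => by rw [← norm_add_sq_real, sub_add_sub_cancel]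
  rw [abs_le]
  constructor
  · have hy : infDist y K ≤ ‖y - q‖ := by rw [← dist_eq_norm]; exact infDist_le_dist_of_mem hq
    have hcs : inner ℝ (z - y) (q - p) ≤ ‖z - y‖ * ‖p - q‖ := by
      rw [← norm_neg (p - q), neg_sub]; exact real_inner_le_norm _ _
    have hinner :
        inner ℝ (z - y) (y - q) - inner ℝ (y - p) (z - y) = -inner ℝ (z - y) (q - p) := by
      rw [real_inner_comm (z - y)]; simp only [inner_sub_right]; ring
    have := hsplit q
    rw [← dist_eq_norm, hzq] at this
    nlinarith [infDist_nonneg (x := y) (s := K), norm_nonneg (z - y)]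
  · have hz : infDist z K ≤ ‖z - p‖ := by rw [← dist_eq_norm]; exact infDist_le_dist_of_mem hp
    have := hsplit p
    rw [← hd, dist_eq_norm, real_inner_comm]
    nlinarith [infDist_nonneg (x := z) (s := K), norm_nonneg (z - y), norm_nonneg (p - q)]

theorem hasGradientAt_half_infDist_sq [ProperSpace E] {K : Set E} (hKc : IsClosed K) {y p : E}
    (hp : p ∈ K) (hd : dist y p = infDist y K)
    (huniq : ∀ q ∈ K, dist y q = infDist y K → q = p) :
    HasGradientAt (fun z => 1 / 2 * infDist z K ^ 2) (y - p) y := by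
  choose q hqK hq using fun z => hKc.exists_infDist_eq_dist ⟨p, hp⟩ z
  have hqp : Tendsto q (𝓝 y) (𝓝 p) :=
    tendsto_nearest_of_unique hKc huniq hqK fun z => (hq z).symm
  have hgap : Tendsto (fun z => 1 / 2 * ‖z - y‖ + ‖p - q z‖) (𝓝 y) (𝓝 0) := by
    have := ((tendsto_id.sub_const y).norm.const_mul (1 / 2)).add (hqp.const_sub p).norm
    simpa only [id, sub_self, norm_zero, mul_zero, add_zero] using this
  have hsmall : (fun z => ‖z - y‖ * (1 / 2 * ‖z - y‖ + ‖p - q z‖)) =o[𝓝 y] fun z => z - y := by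
    simpa using
      (isBigO_refl (fun z => ‖z - y‖) (𝓝 y)).mul_isLittleO ((isLittleO_one_iff ℝ).2 hgap)
  rw [hasGradientAt_iff_isLittleO]
  refine (isBigO_of_le _ fun z => ?_).trans_isLittleO hsmall
  rw [Real.norm_eq_abs, Real.norm_of_nonneg (by positivity)]
  exact abs_half_infDist_sq_sub_inner_le hp hd (hqK z) (hq z).symm

end InnerProduct

theorem stmt_5_general (K : Set (EuclideanSpace ℝ (Fin 3)))
    (hKc : IsClosed K)
    (y p : EuclideanSpace ℝ (Fin 3))
    (hp : p ∈ K) (hd : dist y p = infDist y K)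
    (huniq : ∀ q ∈ K, dist y q = infDist y K → q = p) :
    HasGradientAt (fun z => (1 / 2 : ℝ) * infDist z K ^ 2) (y - p) y :=
  hasGradientAt_half_infDist_sq hKc hp hd huniq

/-- For a nonempty closed `K ⊆ ℝ³`, the function `y ↦ ½ dist(y,K)²` is
differentiable at every point `y` admitting a unique closest point `p ∈ K`,
with gradient `y - p`. -/
theorem stmt_5 (K : Set (EuclideanSpace ℝ (Fin 3)))
    (hK : K.Nonempty) (hKc : IsClosed K)
    (y p : EuclideanSpace ℝ (Fin 3))
    (hp : p ∈ K) (hd : dist y p = infDist y K)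
    (huniq : ∀ q ∈ K, dist y q = infDist y K → q = p) :
    HasGradientAt (fun z => (1 / 2 : ℝ) * infDist z K ^ 2) (y - p) y :=
  stmt_5_general K hKc y p hp hd huniq
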